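/- arXiv:math/0210048 — 3 statements merged into one kernel-verified Lean document; each statement's English description precedes it below -/
import Mathlib

section
/- The scheme Z₀ ⊂ ℂ⁴ × ℙ¹ defined by the equations xu − t²v = 0 and xy + z³t² + t² = 0 (where (u : v) are homogeneous coordinates on ℙ¹), restricted to the affine chart v = 1, is cut out by xu − t² = 0 and y + z³u + u = 0; in this chart the exceptional locus of the projection to Y₀ = V(xy + (z³+1)t²) ⊂ ℂ⁴ is the union of the three lines {x = y = t = 0, z³ + 1 = 0}. -/
/- STATEMENT 5: In the affine chart v = 1 of the blow up of the ideal (x, t²) on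
Y₀ = V(xy + (z³+1)t²) ⊂ ℂ⁴, the scheme Z₀ is cut out by xu − t² = 0 and
y + z³u + u = 0.  In this chart every point of Z₀ maps into Y₀ (so Z₀ satisfies
the original equations xu − t²·v = 0 and xy + z³t² + t² = 0 with v = 1), and the
exceptional locus of the projection g : Z₀ → Y₀, (x,y,z,t,u) ↦ (x,y,z,t) — the
locus where g is not an isomorphism, i.e. where its fibers are not singletons —
is the union of the three lines {x = y = t = 0, z³ + 1 = 0}.
Coordinates: x = p 0, y = p 1, z = p 2, t = p 3, u = p 4. -/

def Z₅ : Set (Fin 5 → ℂ) :=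
  {p | p 0 * p 4 - p 3 ^ 2 = 0 ∧ p 1 + p 2 ^ 3 * p 4 + p 4 = 0}

/-- projection to ℂ⁴ (forgetting the chart coordinate u) -/
def proj₅ (p : Fin 5 → ℂ) : Fin 4 → ℂ := fun i => p i.castSucc

theorem stmt_5 :
    (∀ p ∈ Z₅, p 0 * p 4 - p 3 ^ 2 * 1 = 0 ∧
        p 0 * p 1 + p 2 ^ 3 * p 3 ^ 2 + p 3 ^ 2 = 0) ∧
    {p ∈ Z₅ | ∃ q ∈ Z₅, proj₅ q = proj₅ p ∧ q ≠ p}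
      = {p : Fin 5 → ℂ | p 0 = 0 ∧ p 1 = 0 ∧ p 3 = 0 ∧ p 2 ^ 3 + 1 = 0} := by
  constructor
  · rintro p ⟨h1, h2⟩
    exact ⟨by linear_combination h1,
      by linear_combination p 0 * h2 - (p 2 ^ 3 + 1) * h1⟩
  · ext p
    simp only [Set.mem_setOf_eq, Set.mem_sep_iff, Z₅]
    constructor
    · rintro ⟨⟨h1, h2⟩, q, ⟨hq1, hq2⟩, hproj, hne⟩
      have e0 : q 0 = p 0 := congrFun hproj 0
      have e1 : q 1 = p 1 := congrFun hproj 1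
      have e2 : q 2 = p 2 := congrFun hproj 2
      have e3 : q 3 = p 3 := congrFun hproj 3
      have e4 : q 4 ≠ p 4 := by
        intro h
        apply hne
        funext i
        fin_cases i <;> simp_all
      simp only [e0, e1, e2, e3] at hq1 hq2
      have hx : p 0 = 0 := by
        by_contra hx
        exact e4 (mul_left_cancel₀ hx (by linear_combination hq1 - h1))
      have hz : p 2 ^ 3 + 1 = 0 := by
        by_contra hz
        exact e4 (mul_left_cancel₀ hz (by linear_combination hq2 - h2))
      have ht : p 3 = 0 := by
        have h : p 3 ^ 2 = 0 := by linear_combination -h1 + p 4 * hx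
        exact pow_eq_zero_iff (by norm_num) |>.mp h
      refine ⟨hx, ?_, ht, hz⟩
      linear_combination h2 - p 4 * hz
    · rintro ⟨hx, hy, ht, hz⟩
      set q : Fin 5 → ℂ := Function.update p 4 (p 4 + 1) with hqdef
      have q4 : q 4 = p 4 + 1 := Function.update_self _ _ _
      have qi : ∀ i : Fin 5, i ≠ 4 → q i = p i := fun i hi =>
        Function.update_of_ne hi _ _
      refine ⟨⟨by rw [hx, ht]; ring, by linear_combination hy + p 4 * hz⟩,
        q, ⟨?_, ?_⟩, ?_, ?_⟩
      · rw [qi 0 (by decide), qi 3 (by decide), hx, ht]; ring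
      · rw [qi 1 (by decide), qi 2 (by decide), q4]
        linear_combination hy + (p 4 + 1) * hz
      · funext i
        show q i.castSucc = p i.castSucc
        apply qi
        exact (Fin.castSucc_lt_last i).ne
      · intro h
        have h4 := congrFun h 4
        rw [q4] at h4
        simp at h4
end

section
/- In the surface A₄ singularity S = V(xy − z⁵) ⊂ ℂ³, let E be the curve {x − z = 0, y − z⁴ = 0} and F the curve {x − z² = 0, y − z³ = 0}. Then the scheme-theoretic intersection length of the divisor 5E with F at the origin equals 3. -/
set_option synthInstance.maxHeartbeats 1000000
set_option maxHeartbeats 1000000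

/- STATEMENT 6: In the A₄ surface singularity S = V(xy − z⁵) ⊂ ℂ³, let
E = {x − z = y − z⁴ = 0} and F = {x − z² = y − z³ = 0}.  The scheme-theoretic
intersection length of the divisor 5E with F at the origin equals 3: the length
of O_S/(I_F + I_{5E}) localized at the origin is 3, where I_{5E} = I_E^{(5)} is
the ideal of functions vanishing to order 5 along E (defined as the symbolic
power, i.e. the contraction of the 5-th power of the extension of I_E in the
localization at the prime I_E).  Since the residue field at the origin is ℂ, the
length equals the dimension as a ℂ-vector space.
Coordinates: x = X 0, y = X 1, z = X 2. -/

open MvPolynomial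

noncomputable def relA : Ideal (MvPolynomial (Fin 3) ℂ) :=
  Ideal.span {X 0 * X 1 - X 2 ^ 5}

/-- The coordinate ring of the A₄ singularity S = V(xy − z⁵). -/
abbrev A₄ring := MvPolynomial (Fin 3) ℂ ⧸ relA

noncomputable def qA : MvPolynomial (Fin 3) ℂ →+* A₄ring := Ideal.Quotient.mk relA

/-- The prime ideal of the curve E = {x − z = y − z⁴ = 0} ⊂ S. -/
noncomputable def PE : Ideal A₄ring := Ideal.span {qA (X 0 - X 2), qA (X 1 - X 2 ^ 4)}

/-- The ideal of the curve F = {x − z² = y − z³ = 0} ⊂ S. -/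
noncomputable def IF : Ideal A₄ring := Ideal.span {qA (X 0 - X 2 ^ 2), qA (X 1 - X 2 ^ 3)}

/-- The maximal ideal of the origin. -/
noncomputable def Morig : Ideal A₄ring := Ideal.span {qA (X 0), qA (X 1), qA (X 2)}

/-- The symbolic power I_E^{(5)} = I_{5E}: functions vanishing to order ≥ 5 along E. -/
noncomputable def symb5 [PE.IsPrime] : Ideal A₄ring :=
  Ideal.comap (algebraMap A₄ring (Localization.AtPrime PE))
    ((Ideal.map (algebraMap A₄ring (Localization.AtPrime PE)) PE) ^ 5)

/-- The local ring of S at the origin. -/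
noncomputable abbrev Sorig [Morig.IsPrime] := Localization.AtPrime Morig

noncomputable instance [Morig.IsPrime] : Algebra ℂ Sorig :=
  ((algebraMap A₄ring Sorig).comp (algebraMap ℂ A₄ring)).toAlgebra

/-!
Both bounds go through the ring `ℂ[t]/(t³)`, where `t` is the restriction of `z` to `F`.

The map `S → ℂ[t]/(t³)`, `(x, y, z) ↦ (t², 0, t)`, kills `I_F`. It kills `I_E^(5)` as well,
since it factors through the order-5 thickening `ℂ[z][r]/(r⁵)` of `E` (with `x ↦ z + r`), where
`I_E` maps into `(r)` and every element outside `I_E` becomes a non-zero-divisor. It inverts every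
function not vanishing at the origin, so it descends to `O_{S,0}/(I_F + I_{5E})`.

Conversely, `g = (xy − z⁵ − (x − z)⁵)/x` lies in `I_E^(5)` because `x ∉ I_E`, and modulo `I_F`
it equals `z³(1 − z)⁵`. As `1 − z` is a unit at the origin, `z³ = 0` in the quotient, which is
therefore generated by `z` subject to `z³ = 0`.
-/

theorem Ideal.mem_comap_map_pow_atPrime_iff {R : Type*} [CommRing R] (P : Ideal R) [P.IsPrime]
    (n : ℕ) (a : R) :
    a ∈ (P.map (algebraMap R (Localization.AtPrime P)) ^ n).comap (algebraMap R _) ↔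
      ∃ s ∉ P, s * a ∈ P ^ n := by
  rw [← Ideal.map_pow, mem_comap, IsLocalization.algebraMap_mem_map_algebraMap_iff P.primeCompl]
  rfl

theorem RingHom.map_eq_zero_of_mem_comap_map_pow_atPrime {R T : Type*} [CommRing R] [CommRing T]
    {P : Ideal R} [P.IsPrime] {n : ℕ} (f : R →+* T) {r : T} (hr : r ^ n = 0)
    (hP : P.map f ≤ Ideal.span {r}) (hreg : ∀ s ∉ P, ∀ v, f s * v = 0 → v = 0) {a : R}
    (ha : a ∈ (P.map (algebraMap R (Localization.AtPrime P)) ^ n).comap (algebraMap R _)) :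
    f a = 0 := by
  obtain ⟨s, hs, hsa⟩ := (P.mem_comap_map_pow_atPrime_iff n a).1 ha
  refine hreg s hs _ ?_
  have : (P ^ n).map f ≤ ⊥ := by
    rw [Ideal.map_pow]
    calc (P.map f) ^ n ≤ Ideal.span {r} ^ n := Ideal.pow_right_mono hP n
      _ = ⊥ := by rw [Ideal.span_singleton_pow, hr, Ideal.span_singleton_eq_bot]
  simpa using this (Ideal.mem_map_of_mem f hsa)

theorem AdjoinRoot.eq_zero_of_mul_eq_zero_of_notMem_span_root {R : Type*} [CommRing R] [IsDomain R]
    {n : ℕ} {u v : AdjoinRoot (Polynomial.X ^ n : Polynomial R)}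
    (hu : u ∉ Ideal.span {root _}) (h : u * v = 0) : v = 0 := by
  obtain ⟨f, rfl⟩ := mk_surjective u
  obtain ⟨g, rfl⟩ := mk_surjective v
  rw [← map_mul, mk_eq_zero] at h
  have hf : ¬ Polynomial.X ∣ f := fun hd =>
    hu (Ideal.mem_span_singleton.2 (by rw [← mk_X]; exact map_dvd _ hd))
  exact mk_eq_zero.2 (Polynomial.prime_X.pow_dvd_of_dvd_mul_left n hf h)

theorem isUnit_map_of_notMem_of_map_le_nilradical {R T : Type*} [CommRing R] [CommRing T]
    (f : R →+* T) {M : Ideal R} [M.IsMaximal] (hM : M.map f ≤ nilradical T) {s : R}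
    (hs : s ∉ M) : IsUnit (f s) := by
  by_contra h
  obtain ⟨m, hm, hsm⟩ := exists_max_ideal_of_mem_nonunits h
  have hle : M ≤ m.comap f :=
    Ideal.map_le_iff_le_comap.1 (hM.trans (nilradical_le_prime m))
  have := (Ideal.IsMaximal.eq_of_le ‹_› (Ideal.comap_ne_top f hm.ne_top) hle)
  exact hs (this ▸ hsm)

theorem MvPolynomial.sub_aeval_mem {σ R : Type*} [CommRing R] {I : Ideal (MvPolynomial σ R)}
    {v : σ → MvPolynomial σ R} (hv : ∀ i, X i - v i ∈ I) (q : MvPolynomial σ R) :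
    q - aeval v q ∈ I := by
  have hcomp : (Ideal.Quotient.mkₐ R I).comp (aeval v) = Ideal.Quotient.mkₐ R I :=
    algHom_ext fun i => by
      rw [AlgHom.comp_apply, aeval_X, Ideal.Quotient.mkₐ_eq_mk, Ideal.Quotient.eq, ← neg_sub]
      exact I.neg_mem (hv i)
  rw [← Ideal.Quotient.eq]
  exact (DFunLike.congr_fun hcomp q).symm

lemma qA_surjective : Function.Surjective qA := Ideal.Quotient.mk_surjective

lemma qA_X_mul_qA_X : qA (X 0) * qA (X 1) = qA (X 2) ^ 5 := by
  rw [← map_mul, ← map_pow, ← sub_eq_zero, ← map_sub]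
  exact Ideal.Quotient.eq_zero_iff_mem.2 (Ideal.subset_span rfl)

section lift

variable {T : Type*} [CommRing T] [Algebra ℂ T]

noncomputable def A₄lift (v : Fin 3 → T) (hv : v 0 * v 1 = v 2 ^ 5) : A₄ring →ₐ[ℂ] T :=
  Ideal.Quotient.liftₐ relA (aeval v) fun a ha => by
    obtain ⟨c, rfl⟩ := Ideal.mem_span_singleton'.1 ha
    simp [hv]

@[simp] lemma A₄lift_qA (v : Fin 3 → T) (hv : v 0 * v 1 = v 2 ^ 5)
    (p : MvPolynomial (Fin 3) ℂ) : A₄lift v hv (qA p) = aeval v p := rfl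

lemma A₄ring.algHom_ext {f g : A₄ring →ₐ[ℂ] T} (h : ∀ i, f (qA (X i)) = g (qA (X i))) :
    f = g :=
  Ideal.Quotient.algHom_ext ℂ (MvPolynomial.algHom_ext h)

end lift

-- `ℂ[z][r]/(r⁵)`: the order-5 thickening of `E`, with `r` standing for `x − z`.
abbrev NbhdE := AdjoinRoot (Polynomial.X ^ 5 : Polynomial (Polynomial ℂ))

namespace NbhdE

noncomputable def z : NbhdE := AdjoinRoot.of _ Polynomial.X
noncomputable def r : NbhdE := AdjoinRoot.root _

lemma r_pow_five : r ^ 5 = 0 := by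
  rw [r, ← AdjoinRoot.mk_X, ← map_pow, AdjoinRoot.mk_self]

end NbhdE

abbrev Trunc3 := AdjoinRoot (Polynomial.X ^ 3 : Polynomial ℂ)

namespace Trunc3

noncomputable def t : Trunc3 := AdjoinRoot.root _

lemma t_pow_three : t ^ 3 = 0 := by
  rw [t, ← AdjoinRoot.mk_X, ← map_pow, AdjoinRoot.mk_self]

end Trunc3

open NbhdE Trunc3

-- `y ↦ (z⁵ + r⁵)/(z + r)`, which is `z⁵/x` since `r⁵ = 0`.
noncomputable def toNbhdE : A₄ring →ₐ[ℂ] NbhdE :=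
  A₄lift ![z + r, z ^ 4 - z ^ 3 * r + z ^ 2 * r ^ 2 - z * r ^ 3 + r ^ 4, z] <| by
    simp only [Matrix.cons_val]
    linear_combination r_pow_five

noncomputable def paramE : A₄ring →ₐ[ℂ] Polynomial ℂ :=
  A₄lift ![Polynomial.X, Polynomial.X ^ 4, Polynomial.X] <| by simp; ring

noncomputable def evalOrigin : A₄ring →ₐ[ℂ] ℂ := A₄lift 0 <| by simp

noncomputable def lineOfNbhdE : NbhdE →ₐ[ℂ] Polynomial ℂ :=
  AdjoinRoot.liftAlgHom _ (AlgHom.id ℂ _) 0 <| by simp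

-- Restriction to `F`, where `x − z = z² − z`.
noncomputable def truncOfNbhdE : NbhdE →ₐ[ℂ] Trunc3 :=
  AdjoinRoot.liftAlgHom _ (Polynomial.aeval t) (t ^ 2 - t) <| by
    simp only [Polynomial.eval₂_X_pow]
    linear_combination (t ^ 2 * (t - 1) ^ 5) * t_pow_three

noncomputable def toTrunc3 : A₄ring →ₐ[ℂ] Trunc3 := truncOfNbhdE.comp toNbhdE

lemma lineOfNbhdE_comp_toNbhdE : lineOfNbhdE.comp toNbhdE = paramE := by
  apply A₄ring.algHom_ext
  intro i
  fin_cases i <;> simp [toNbhdE, paramE, lineOfNbhdE, z, r]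

@[simp] lemma toTrunc3_x : toTrunc3 (qA (X 0)) = t ^ 2 := by
  simp [toTrunc3, toNbhdE, truncOfNbhdE, z, r]

@[simp] lemma toTrunc3_y : toTrunc3 (qA (X 1)) = 0 := by
  simp [toTrunc3, toNbhdE, truncOfNbhdE, z, r]
  linear_combination (5 * t - 10 * t ^ 2 + 10 * t ^ 3 - 5 * t ^ 4 + t ^ 5) * t_pow_three

@[simp] lemma toTrunc3_z : toTrunc3 (qA (X 2)) = t := by
  simp [toTrunc3, toNbhdE, truncOfNbhdE, z, r]

lemma mem_PE_iff (a : A₄ring) : a ∈ PE ↔ paramE a = 0 := by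
  constructor
  · intro ha
    refine (Ideal.span_le (I := RingHom.ker paramE)).2 ?_ ha
    rintro _ (rfl | rfl) <;> simp [paramE]
  · obtain ⟨q, rfl⟩ := qA_surjective a
    intro hq
    have hv : ∀ i, X i - ![X 2, X 2 ^ 4, X 2] i ∈
        Ideal.span {(X 0 - X 2 : MvPolynomial (Fin 3) ℂ), X 1 - X 2 ^ 4} := by
      intro i
      fin_cases i <;> simp <;> exact Ideal.subset_span (by simp)
    have hsubst : aeval (![X 2, X 2 ^ 4, X 2] : Fin 3 → MvPolynomial (Fin 3) ℂ) q =
        Polynomial.aeval (X 2) (paramE (qA q)) := by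
      rw [paramE, A₄lift_qA, ← AlgHom.comp_apply]
      congr 1
      refine MvPolynomial.algHom_ext fun i => ?_
      fin_cases i <;> simp
    have := Ideal.mem_map_of_mem qA (sub_aeval_mem hv q)
    rwa [hsubst, hq, map_zero, sub_zero, Ideal.map_span, Set.image_pair] at this

lemma mem_Morig_iff (a : A₄ring) : a ∈ Morig ↔ evalOrigin a = 0 := by
  constructor
  · intro ha
    refine (Ideal.span_le (I := RingHom.ker evalOrigin)).2 ?_ ha
    rintro _ (rfl | rfl | rfl) <;> simp [evalOrigin]
  · obtain ⟨q, rfl⟩ := qA_surjective a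
    intro hq
    have hv : ∀ i, X i - (0 : Fin 3 → MvPolynomial (Fin 3) ℂ) i ∈
        Ideal.span {(X 0 : MvPolynomial (Fin 3) ℂ), X 1, X 2} := by
      intro i
      fin_cases i <;> simp <;> exact Ideal.subset_span (by simp)
    have hsubst : aeval (0 : Fin 3 → MvPolynomial (Fin 3) ℂ) q = C (evalOrigin (qA q)) := by
      simp only [evalOrigin, A₄lift_qA, aeval_zero, Algebra.algebraMap_self, RingHom.id_apply,
        MvPolynomial.algebraMap_eq]
    have := Ideal.mem_map_of_mem qA (sub_aeval_mem hv q)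
    rwa [hsubst, hq, map_zero, sub_zero, Ideal.map_span, Set.image_insert_eq,
      Set.image_pair] at this

lemma map_PE_toNbhdE_le : PE.map toNbhdE ≤ Ideal.span {r} := by
  rw [PE, Ideal.map_span, Set.image_pair, Ideal.span_le]
  rintro _ (rfl | rfl) <;> rw [SetLike.mem_coe, Ideal.mem_span_singleton]
  · exact ⟨1, by simp [toNbhdE]⟩
  · exact ⟨-z ^ 3 + z ^ 2 * r - z * r ^ 2 + r ^ 3, by simp [toNbhdE]; ring⟩

lemma toNbhdE_mem_span_r_iff (a : A₄ring) : toNbhdE a ∈ Ideal.span {r} ↔ a ∈ PE := by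
  refine ⟨fun h => (mem_PE_iff a).2 ?_, fun h => map_PE_toNbhdE_le (Ideal.mem_map_of_mem _ h)⟩
  obtain ⟨w, hw⟩ := Ideal.mem_span_singleton'.1 h
  rw [← lineOfNbhdE_comp_toNbhdE, AlgHom.comp_apply, ← hw, map_mul]
  simp [lineOfNbhdE, r]

lemma toNbhdE_eq_zero_of_mem_symb5 [PE.IsPrime] {a : A₄ring} (ha : a ∈ symb5) :
    toNbhdE a = 0 :=
  RingHom.map_eq_zero_of_mem_comap_map_pow_atPrime toNbhdE.toRingHom r_pow_five
    map_PE_toNbhdE_le (fun s hs _ hv => AdjoinRoot.eq_zero_of_mul_eq_zero_of_notMem_span_root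
      ((toNbhdE_mem_span_r_iff s).not.2 hs) hv) ha

lemma toTrunc3_eq_zero_of_mem [PE.IsPrime] {a : A₄ring} (ha : a ∈ IF ⊔ symb5) :
    toTrunc3 a = 0 := by
  refine (sup_le (Ideal.span_le.2 ?_) fun b hb => ?_ : IF ⊔ symb5 ≤ RingHom.ker toTrunc3) ha
  · rintro _ (rfl | rfl) <;> simp [t_pow_three]
  · simp [RingHom.mem_ker, toTrunc3, toNbhdE_eq_zero_of_mem_symb5 hb]

instance Morig_isMaximal : Morig.IsMaximal := by
  have : Morig = RingHom.ker evalOrigin := Ideal.ext mem_Morig_iff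
  rw [this]
  exact RingHom.ker_isMaximal_of_surjective _ fun c => ⟨algebraMap ℂ _ c, by simp⟩

lemma isUnit_toTrunc3 {s : A₄ring} (hs : s ∉ Morig) : IsUnit (toTrunc3 s) := by
  refine isUnit_map_of_notMem_of_map_le_nilradical toTrunc3.toRingHom ?_ hs
  rw [Morig, Ideal.map_span, Set.image_insert_eq, Set.image_pair, Ideal.span_le]
  have ht : IsNilpotent t := ⟨3, t_pow_three⟩
  rintro _ (rfl | rfl | rfl) <;>
    simp only [AlgHom.toRingHom_eq_coe, RingHom.coe_coe, SetLike.mem_coe, mem_nilradical,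
      toTrunc3_x, toTrunc3_y, toTrunc3_z]
  · exact ht.pow_succ 1
  · exact IsNilpotent.zero
  · exact ht

-- `x * eqn5E = (xy − z⁵) − (x − z)⁵`.
noncomputable def eqn5E : MvPolynomial (Fin 3) ℂ :=
  X 1 - X 2 ^ 4 + X 2 ^ 3 * (X 0 - X 2) - X 2 ^ 2 * (X 0 - X 2) ^ 2 + X 2 * (X 0 - X 2) ^ 3 -
    (X 0 - X 2) ^ 4

lemma qA_eqn5E_mem_symb5 [PE.IsPrime] : qA eqn5E ∈ symb5 := by
  rw [symb5, Ideal.mem_comap_map_pow_atPrime_iff]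
  refine ⟨qA (X 0), by simp [mem_PE_iff, paramE], ?_⟩
  have hx : qA (X 0) * qA eqn5E = -qA (X 0 - X 2) ^ 5 := by
    simp only [eqn5E, map_sub, map_add, map_mul, map_pow]
    linear_combination qA_X_mul_qA_X
  rw [hx]
  exact neg_mem (Ideal.pow_mem_pow (Ideal.subset_span (by simp)) 5)

lemma qA_eqn5E_sub_mem_IF : qA eqn5E - qA (X 2 ^ 3 * (1 - X 2) ^ 5) ∈ IF := by
  have hv : ∀ i, X i - ![X 2 ^ 2, X 2 ^ 3, X 2] i ∈
      Ideal.span {(X 0 - X 2 ^ 2 : MvPolynomial (Fin 3) ℂ), X 1 - X 2 ^ 3} := by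
    intro i
    fin_cases i <;> simp <;> exact Ideal.subset_span (by simp)
  have hsubst : aeval (![X 2 ^ 2, X 2 ^ 3, X 2] : Fin 3 → MvPolynomial (Fin 3) ℂ) eqn5E =
      X 2 ^ 3 * (1 - X 2) ^ 5 := by
    simp [eqn5E]; ring
  have := Ideal.mem_map_of_mem qA (sub_aeval_mem hv eqn5E)
  rwa [hsubst, map_sub, Ideal.map_span, Set.image_pair] at this

lemma finrank_trunc3 : Module.finrank ℂ Trunc3 = 3 := by
  rw [(AdjoinRoot.powerBasis (pow_ne_zero 3 Polynomial.X_ne_zero)).finrank,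
    AdjoinRoot.powerBasis_dim, Polynomial.natDegree_X_pow]

section localization

variable [PE.IsPrime] [Morig.IsPrime]

-- Instance search does not find `CommRing Sorig` while solving `HasQuotient Sorig (Ideal Sorig)`,
-- whose first argument is an out-param.
noncomputable local instance : CommRing Sorig := inferInstance

local notation "Jorig" => Ideal.map (algebraMap A₄ring Sorig) (IF ⊔ symb5)

noncomputable def toQuot : A₄ring →ₐ[ℂ] Sorig ⧸ Jorig :=
  { algebraMap A₄ring (Sorig ⧸ Jorig) with commutes' := fun _ => rfl }

lemma toQuot_eq_zero_of_mem {a : A₄ring} (ha : a ∈ IF ⊔ symb5) : toQuot a = 0 :=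
  Ideal.Quotient.eq_zero_iff_mem.2 (Ideal.mem_map_of_mem _ ha)

lemma isUnit_toQuot {a : A₄ring} (ha : a ∉ Morig) : IsUnit (toQuot a) :=
  (IsLocalization.map_units Sorig (⟨a, ha⟩ : Morig.primeCompl)).map (Ideal.Quotient.mk _)

lemma toQuot_z_pow_three : toQuot (qA (X 2)) ^ 3 = 0 := by
  have hunit : IsUnit (toQuot (qA (1 - X 2))) :=
    isUnit_toQuot <| by simp [mem_Morig_iff, evalOrigin]
  have h : toQuot (qA (X 2)) ^ 3 * toQuot (qA (1 - X 2)) ^ 5 =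
      toQuot (qA eqn5E) - toQuot (qA eqn5E - qA (X 2 ^ 3 * (1 - X 2) ^ 5)) := by
    simp only [map_sub, map_mul, map_pow]
    ring
  rw [toQuot_eq_zero_of_mem (Ideal.mem_sup_right qA_eqn5E_mem_symb5),
    toQuot_eq_zero_of_mem (Ideal.mem_sup_left qA_eqn5E_sub_mem_IF), sub_zero] at h
  exact (hunit.pow 5).mul_left_eq_zero.1 h

noncomputable def truncOfLocal : Sorig →ₐ[ℂ] Trunc3 :=
  { IsLocalization.lift (M := Morig.primeCompl) (g := toTrunc3.toRingHom)
      fun s => isUnit_toTrunc3 s.2 with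
    commutes' := fun c => (IsLocalization.lift_eq _ _).trans (toTrunc3.commutes c) }

noncomputable def truncOfQuot : (Sorig ⧸ Jorig) →ₐ[ℂ] Trunc3 :=
  Ideal.Quotient.liftₐ Jorig truncOfLocal fun a ha => by
    refine (Ideal.map_le_iff_le_comap.2 (fun b hb => ?_) : Jorig ≤ RingHom.ker truncOfLocal) ha
    exact (IsLocalization.lift_eq _ _).trans (toTrunc3_eq_zero_of_mem hb)

lemma truncOfQuot_toQuot (a : A₄ring) : truncOfQuot (toQuot a) = toTrunc3 a :=
  IsLocalization.lift_eq _ _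

noncomputable def quotOfTrunc : Trunc3 →ₐ[ℂ] Sorig ⧸ Jorig :=
  AdjoinRoot.liftAlgHom _ (Algebra.ofId ℂ _) (toQuot (qA (X 2))) <| by
    simpa using toQuot_z_pow_three

lemma quotOfTrunc_comp_toTrunc3 : quotOfTrunc.comp toTrunc3 = toQuot := by
  have hIF {p q : MvPolynomial (Fin 3) ℂ}
      (h : p - q ∈ Ideal.span {X 0 - X 2 ^ 2, X 1 - X 2 ^ 3}) : toQuot (qA p) = toQuot (qA q) := by
    rw [← sub_eq_zero, ← map_sub, ← map_sub]
    refine toQuot_eq_zero_of_mem (Ideal.mem_sup_left ?_)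
    simpa [IF, Ideal.map_span, Set.image_pair] using Ideal.mem_map_of_mem qA h
  have hx : toQuot (qA (X 0)) = toQuot (qA (X 2)) ^ 2 := by
    rw [← map_pow, ← map_pow]
    exact hIF (Ideal.subset_span (by simp))
  have hy : toQuot (qA (X 1)) = 0 := by
    rw [← toQuot_z_pow_three, ← map_pow, ← map_pow]
    exact hIF (Ideal.subset_span (by simp))
  refine A₄ring.algHom_ext fun i => ?_
  fin_cases i <;> simp [quotOfTrunc, t, hx, hy]

lemma quotOfTrunc_comp_truncOfQuot :
    quotOfTrunc.comp truncOfQuot = AlgHom.id ℂ (Sorig ⧸ Jorig) := by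
  refine AlgHom.coe_ringHom_injective (Ideal.Quotient.ringHom_ext
    (IsLocalization.ringHom_ext Morig.primeCompl (RingHom.ext fun a => ?_)))
  change quotOfTrunc (truncOfQuot (toQuot a)) = toQuot a
  rw [truncOfQuot_toQuot, ← AlgHom.comp_apply, quotOfTrunc_comp_toTrunc3]

noncomputable def truncEquivQuot : Trunc3 ≃ₐ[ℂ] Sorig ⧸ Jorig :=
  AlgEquiv.ofAlgHom quotOfTrunc truncOfQuot quotOfTrunc_comp_truncOfQuot <|
    AdjoinRoot.algHom_ext <| by simp [quotOfTrunc, truncOfQuot_toQuot, t]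

-- The `ℂ`-module structure of the quotient comes from the scalar action on the localization, which
-- agrees with the `Algebra ℂ Sorig` instance above only propositionally.
lemma quot_smul_eq_algebraMap_mul (c : ℂ) (w : Sorig ⧸ Jorig) :
    c • w = algebraMap ℂ _ c * w := by
  obtain ⟨u, rfl⟩ := Ideal.Quotient.mk_surjective w
  change c • Submodule.Quotient.mk u = Submodule.Quotient.mk (algebraMap ℂ Sorig c * u)
  rw [← Submodule.Quotient.mk_smul, ← IsScalarTower.algebraMap_smul A₄ring c u]
  exact congrArg _ (Algebra.smul_def (A := Sorig) (algebraMap ℂ A₄ring c) u)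

noncomputable def truncLinearEquivQuot : Trunc3 ≃ₗ[ℂ] Sorig ⧸ Jorig where
  __ := truncEquivQuot.toRingEquiv
  map_smul' c v := by
    rw [RingHom.id_apply, quot_smul_eq_algebraMap_mul, Algebra.smul_def]
    exact (map_mul truncEquivQuot _ _).trans (by rw [AlgEquiv.commutes]; rfl)

end localization

theorem stmt_6 [PE.IsPrime] [Morig.IsPrime] :
    Module.finrank ℂ
      (@HasQuotient.Quotient Sorig (Ideal Sorig) (Ideal.instHasQuotient (R := Sorig))
        (Ideal.map (algebraMap A₄ring Sorig) (IF ⊔ symb5))) = 3 :=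
  truncLinearEquivQuot.finrank_eq.symm.trans finrank_trunc3
end

section
/- Let 0 ∈ X be a 3-fold hypersurface singularity x² + 2xφ(y,z,t) + yh(y,z,t) = 0 with φ, h ∈ (y,z,t)², and let Z ⊂ X be the smooth surface given by x − φ(y,z,t) = y = 0 after eliminating the cross term (so X: x² + yh − φ² = 0). If mult₀ h(y,z,t) ≥ 3, then the birational transform of Z under the (2,1,1,1)-weighted blow up of X at 0 (weights w(x)=2, w(y)=w(z)=w(t)=1) equals the ordinary blow up B₀Z of Z at the origin; in particular it is smooth. -/
/- STATEMENT 11: X: x² + yh − φ² = 0 with Z ⊂ X the smooth surface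
x − φ(y,z,t) = y = 0, mult₀ h ≥ 3.  The birational transform of Z under the
(2,1,1,1)-weighted blow up of X at 0 equals the ordinary blow up B₀Z; in
particular it is smooth.  Per the context, the claim is the ideal-theoretic
identity behind this: identifying Z with the hypersurface x = φ₁(z,t) in
ℂ³_{x,z,t} (φ₁(z,t) = φ(0,z,t), mult₀ φ₁ ≥ 2), for every n we have
  (m^w(n) + I_Z)/I_Z = (mⁿ + I_Z)/I_Z,
where m^w(n) is the ideal generated by the monomials xⁱ z^k t^j with
2i + k + j ≥ n, m = (x, z, t) and I_Z = (x − φ₁); hence the Proj of the two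
Rees-type algebras agree and the transform is B₀Z, which is smooth.
Coordinates: x = X 0, z = X 1, t = X 2; φ₁ is a polynomial in z, t only
(it lies in the subalgebra generated by z and t) with φ₁ ∈ (z,t)². -/

open MvPolynomial

theorem stmt_11 (φ₁ : MvPolynomial (Fin 3) ℂ)
    (hvars : φ₁ ∈ Algebra.adjoin ℂ ({X 1, X 2} : Set (MvPolynomial (Fin 3) ℂ)))
    (hmult : φ₁ ∈ (Ideal.span {X 1, X 2} : Ideal (MvPolynomial (Fin 3) ℂ)) ^ 2) :
    ∀ n : ℕ,
      Ideal.span {f : MvPolynomial (Fin 3) ℂ |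
          ∃ i k j : ℕ, n ≤ 2 * i + k + j ∧ f = X 0 ^ i * X 1 ^ k * X 2 ^ j}
        ⊔ Ideal.span {X 0 - φ₁}
      = (Ideal.span {X 0, X 1, X 2} : Ideal (MvPolynomial (Fin 3) ℂ)) ^ n
        ⊔ Ideal.span {X 0 - φ₁} := by
  intro n
  set m : Ideal (MvPolynomial (Fin 3) ℂ) := Ideal.span {X 0, X 1, X 2} with hm
  have hφm : φ₁ ∈ m ^ 2 := by
    refine Ideal.pow_right_mono ?_ 2 hmult
    apply Ideal.span_mono
    intro a ha
    simp only [Set.mem_insert_iff, Set.mem_singleton_iff] at ha ⊢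
    tauto
  have hz : (X 1 : MvPolynomial (Fin 3) ℂ) ∈ m := Ideal.subset_span (by simp)
  have ht : (X 2 : MvPolynomial (Fin 3) ℂ) ∈ m := Ideal.subset_span (by simp)
  have key : ∀ N : ℕ, m ^ N ≤
      Ideal.span {f : MvPolynomial (Fin 3) ℂ |
        ∃ i k j : ℕ, N ≤ 2 * i + k + j ∧ f = X 0 ^ i * X 1 ^ k * X 2 ^ j} := by
    intro N
    induction N with
    | zero =>
      rw [pow_zero, Ideal.one_eq_top, top_le_iff, Ideal.eq_top_iff_one]
      exact Ideal.subset_span ⟨0, 0, 0, by omega, by simp⟩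
    | succ N ih =>
      rw [pow_succ]
      calc m ^ N * m ≤ _ * m := Ideal.mul_mono_left ih
        _ ≤ _ := by
          rw [hm, Ideal.span_mul_span']
          apply Ideal.span_mono
          rintro f ⟨g, ⟨i, k, j, hn, rfl⟩, y, hy, rfl⟩
          simp only [Set.mem_insert_iff, Set.mem_singleton_iff] at hy
          rcases hy with rfl | rfl | rfl
          · exact ⟨i + 1, k, j, by omega, by ring⟩
          · exact ⟨i, k + 1, j, by omega, by ring⟩
          · exact ⟨i, k, j + 1, by omega, by ring⟩
  apply le_antisymm
  · refine sup_le ?_ le_sup_right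
    rw [Ideal.span_le]
    rintro f ⟨i, k, j, hn, rfl⟩
    have h1 : φ₁ ^ i * X 1 ^ k * X 2 ^ j ∈ m ^ (2 * i + k + j) := by
      rw [pow_add, pow_add, pow_mul]
      exact Ideal.mul_mem_mul
        (Ideal.mul_mem_mul (Ideal.pow_mem_pow hφm i) (Ideal.pow_mem_pow hz k))
        (Ideal.pow_mem_pow ht j)
    have h1' : φ₁ ^ i * X 1 ^ k * X 2 ^ j ∈ m ^ n :=
      Ideal.pow_le_pow_right hn h1
    have h2 : X 0 ^ i * X 1 ^ k * X 2 ^ j - φ₁ ^ i * X 1 ^ k * X 2 ^ j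
        ∈ Ideal.span {X 0 - φ₁} := by
      rw [Ideal.mem_span_singleton]
      have : X 0 ^ i * X 1 ^ k * X 2 ^ j - φ₁ ^ i * X 1 ^ k * X 2 ^ j
          = (X 0 ^ i - φ₁ ^ i) * (X 1 ^ k * X 2 ^ j) := by ring
      rw [this]
      exact (sub_dvd_pow_sub_pow _ _ i).mul_right _
    have : X 0 ^ i * X 1 ^ k * X 2 ^ j
        = (X 0 ^ i * X 1 ^ k * X 2 ^ j - φ₁ ^ i * X 1 ^ k * X 2 ^ j)
          + φ₁ ^ i * X 1 ^ k * X 2 ^ j := by ring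
    rw [this]
    exact Ideal.add_mem _ (Ideal.mem_sup_right h2) (Ideal.mem_sup_left h1')
  · exact sup_le ((key n).trans le_sup_left) le_sup_right
end
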